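/- Fix average power constraints P̄1, P̄2 > 0 and let 𝒫 be the set of measurable p = (p1, p2) : Ω → [0,∞)² with E[p_k] ≤ P̄_k for k = 1, 2. Suppose p* ∈ 𝒫 attains the supremum of S1(0,p) over p ∈ 𝒫 (the single-user waterfilling policy for the two interference-free links), and suppose S1(0,p*) < min(S2(0,p*), S3(0,p*)) (the ergodic-very-strong condition). Then the supremum over all p ∈ 𝒫 and all power-split policies (α1, α2) of min over j ∈ {1,...,6} of S_j(α,p) equals S1(0,p*) = E[C(g11 p1*)] + E[C(g22 p2*)], and it is attained at α ≡ 0 and p = p*. -/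

import Mathlib

open MeasureTheory

/-- `C(x) = log₂(1+x)`. -/
noncomputable def C (x : ℝ) : ℝ := Real.logb 2 (1 + x)

variable {Ω : Type*} [MeasurableSpace Ω]

/-- Han–Kobayashi sum-rate bound `S1(α,p)` (sum of the two individual-rate bounds). -/
noncomputable def S1 (μ : Measure Ω) (g11 g12 g21 g22 p1 p2 a1 a2 : Ω → ℝ) : ℝ :=
  (∫ ω, C (g11 ω * p1 ω / (1 + a2 ω * g12 ω * p2 ω)) ∂μ)
    + ∫ ω, C (g22 ω * p2 ω / (1 + a1 ω * g21 ω * p1 ω)) ∂μ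

/-- Han–Kobayashi sum-rate bound `S2(α,p)`. -/
noncomputable def S2 (μ : Measure Ω) (g11 g12 g21 g22 p1 p2 a1 a2 : Ω → ℝ) : ℝ :=
  (∫ ω, C ((g11 ω * p1 ω + (1 - a2 ω) * g12 ω * p2 ω) / (1 + a2 ω * g12 ω * p2 ω)) ∂μ)
    + ∫ ω, C (a2 ω * g22 ω * p2 ω / (1 + a1 ω * g21 ω * p1 ω)) ∂μ

/-- Han–Kobayashi sum-rate bound `S3(α,p)`: `S2` with the roles of the two users swapped. -/
noncomputable def S3 (μ : Measure Ω) (g11 g12 g21 g22 p1 p2 a1 a2 : Ω → ℝ) : ℝ :=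
  S2 μ g22 g21 g12 g11 p2 p1 a2 a1

/-- Han–Kobayashi sum-rate bound `S4(α,p)`. -/
noncomputable def S4 (μ : Measure Ω) (g11 g12 g21 g22 p1 p2 a1 a2 : Ω → ℝ) : ℝ :=
  (∫ ω, C ((a1 ω * g11 ω * p1 ω + (1 - a2 ω) * g12 ω * p2 ω) / (1 + a2 ω * g12 ω * p2 ω)) ∂μ)
    + ∫ ω, C ((a2 ω * g22 ω * p2 ω + (1 - a1 ω) * g21 ω * p1 ω) / (1 + a1 ω * g21 ω * p1 ω)) ∂μ

/-- Han–Kobayashi sum-rate bound `S5(α,p)` (the `2R1 + R2` bound combined with `R2`). -/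
noncomputable def S5 (μ : Measure Ω) (g11 g12 g21 g22 p1 p2 a1 a2 : Ω → ℝ) : ℝ :=
  ((∫ ω, C ((g11 ω * p1 ω + (1 - a2 ω) * g12 ω * p2 ω) / (1 + a2 ω * g12 ω * p2 ω)) ∂μ)
    + (∫ ω, C (a1 ω * g11 ω * p1 ω / (1 + a2 ω * g12 ω * p2 ω)) ∂μ)
    + (∫ ω, C ((a2 ω * g22 ω * p2 ω + (1 - a1 ω) * g21 ω * p1 ω) / (1 + a1 ω * g21 ω * p1 ω)) ∂μ)
    + ∫ ω, C (g22 ω * p2 ω / (1 + a1 ω * g21 ω * p1 ω)) ∂μ) / 2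

/-- Han–Kobayashi sum-rate bound `S6(α,p)`: `S5` with the roles of the two users swapped. -/
noncomputable def S6 (μ : Measure Ω) (g11 g12 g21 g22 p1 p2 a1 a2 : Ω → ℝ) : ℝ :=
  S5 μ g22 g21 g12 g11 p2 p1 a2 a1

/-- The Han–Kobayashi sum-rate bound: `min` over `j ∈ {1,…,6}` of `S_j(α,p)`. -/
noncomputable def minS (μ : Measure Ω) (g11 g12 g21 g22 p1 p2 a1 a2 : Ω → ℝ) : ℝ :=
  min (S1 μ g11 g12 g21 g22 p1 p2 a1 a2)
    (min (S2 μ g11 g12 g21 g22 p1 p2 a1 a2)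
      (min (S3 μ g11 g12 g21 g22 p1 p2 a1 a2)
        (min (S4 μ g11 g12 g21 g22 p1 p2 a1 a2)
          (min (S5 μ g11 g12 g21 g22 p1 p2 a1 a2) (S6 μ g11 g12 g21 g22 p1 p2 a1 a2)))))

/-- A feasible power policy: measurable, nonnegative, integrable, with fading-averaged powers
at most `P̄1`, `P̄2`. -/
def Feasible (μ : Measure Ω) (P1bar P2bar : ℝ) (q1 q2 : Ω → ℝ) : Prop :=
  Measurable q1 ∧ Measurable q2 ∧ (∀ ω, 0 ≤ q1 ω) ∧ (∀ ω, 0 ≤ q2 ω) ∧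
    Integrable q1 μ ∧ Integrable q2 μ ∧
    (∫ ω, q1 ω ∂μ) ≤ P1bar ∧ (∫ ω, q2 ω ∂μ) ≤ P2bar


/-! At `α ≡ 0` the interference terms vanish, and for every `(q, α)` we have
`min_j S_j(α,q) ≤ S1(α,q) ≤ S1(0,q) ≤ S1(0,p*)`, since treating interference as noise only
lowers each link's rate. Conversely, at `(p*, 0)` subadditivity of `C` gives
`S2(0,p*) ≤ E[C(g11 p1*)] + E[C(g12 p2*)]`, so the very strong condition forces the cross links to
beat the direct ones: `E[C(g22 p2*)] < E[C(g12 p2*)]` and `E[C(g11 p1*)] < E[C(g21 p1*)]`.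
These two inequalities make `S4`, `S5`, `S6` at `(p*, 0)` exceed `S1(0,p*)`. -/

lemma C_zero : C 0 = 0 := by simp [C]

lemma C_nonneg {x : ℝ} (hx : 0 ≤ x) : 0 ≤ C x :=
  Real.logb_nonneg one_lt_two (by linarith)

lemma C_le_C {x y : ℝ} (hx : 0 ≤ x) (h : x ≤ y) : C x ≤ C y :=
  Real.logb_le_logb_of_le one_lt_two (by linarith) (by linarith)

lemma C_add_le {x y : ℝ} (hx : 0 ≤ x) (hy : 0 ≤ y) : C (x + y) ≤ C x + C y := by
  unfold C
  rw [← Real.logb_mul (by positivity) (by positivity)]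
  exact Real.logb_le_logb_of_le one_lt_two (by linarith) (by nlinarith)

lemma C_div_one_add_le {x y : ℝ} (hx : 0 ≤ x) (hy : 0 ≤ y) : C (x / (1 + y)) ≤ C x :=
  C_le_C (by positivity) (div_le_self hx (by linarith))

lemma measurable_C : Measurable C :=
  (Real.measurable_log.comp (measurable_const.add measurable_id)).div_const _

section Integrability

variable {μ : Measure Ω} {f g : Ω → ℝ}

lemma integrable_C_of_le (hf : Measurable f) (hf0 : ∀ ω, 0 ≤ f ω)
    (hfg : ∀ ω, f ω ≤ g ω) (hg : Integrable (fun ω => C (g ω)) μ) :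
    Integrable (fun ω => C (f ω)) μ :=
  hg.mono' (measurable_C.comp hf).aestronglyMeasurable <| .of_forall fun ω => by
    rw [Real.norm_eq_abs, abs_of_nonneg (C_nonneg (hf0 ω))]
    exact C_le_C (hf0 ω) (hfg ω)

lemma integrable_C_left (hf : Measurable f) (hf0 : ∀ ω, 0 ≤ f ω) (hg0 : ∀ ω, 0 ≤ g ω)
    (h : Integrable (fun ω => C (f ω + g ω)) μ) : Integrable (fun ω => C (f ω)) μ :=
  integrable_C_of_le hf hf0 (fun ω => le_add_of_nonneg_right (hg0 ω)) h

lemma integrable_C_right (hg : Measurable g) (hf0 : ∀ ω, 0 ≤ f ω) (hg0 : ∀ ω, 0 ≤ g ω)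
    (h : Integrable (fun ω => C (f ω + g ω)) μ) : Integrable (fun ω => C (g ω)) μ :=
  integrable_C_of_le hg hg0 (fun ω => le_add_of_nonneg_left (hf0 ω)) h

lemma integral_C_add_le (hf : Measurable f) (hg : Measurable g) (hf0 : ∀ ω, 0 ≤ f ω)
    (hg0 : ∀ ω, 0 ≤ g ω) (h : Integrable (fun ω => C (f ω + g ω)) μ) :
    ∫ ω, C (f ω + g ω) ∂μ ≤ (∫ ω, C (f ω) ∂μ) + ∫ ω, C (g ω) ∂μ := by
  have hCf := integrable_C_left hf hf0 hg0 h
  have hCg := integrable_C_right hg hf0 hg0 h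
  rw [← integral_add hCf hCg]
  exact integral_mono h (hCf.add hCg) fun ω => C_add_le (hf0 ω) (hg0 ω)

end Integrability

section SumRates

variable (μ : Measure Ω) (g11 g12 g21 g22 p1 p2 : Ω → ℝ)

lemma S1_zero : S1 μ g11 g12 g21 g22 p1 p2 0 0
    = (∫ ω, C (g11 ω * p1 ω) ∂μ) + ∫ ω, C (g22 ω * p2 ω) ∂μ := by
  simp [S1]

lemma S2_zero :
    S2 μ g11 g12 g21 g22 p1 p2 0 0 = ∫ ω, C (g11 ω * p1 ω + g12 ω * p2 ω) ∂μ := by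
  simp [S2, C_zero]

lemma S4_zero : S4 μ g11 g12 g21 g22 p1 p2 0 0
    = (∫ ω, C (g12 ω * p2 ω) ∂μ) + ∫ ω, C (g21 ω * p1 ω) ∂μ := by
  simp [S4]

lemma S5_zero : S5 μ g11 g12 g21 g22 p1 p2 0 0
    = (S2 μ g11 g12 g21 g22 p1 p2 0 0 + (∫ ω, C (g21 ω * p1 ω) ∂μ)
        + ∫ ω, C (g22 ω * p2 ω) ∂μ) / 2 := by
  simp [S5, S2_zero, C_zero]

lemma S6_zero : S6 μ g11 g12 g21 g22 p1 p2 0 0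
    = (S3 μ g11 g12 g21 g22 p1 p2 0 0 + (∫ ω, C (g12 ω * p2 ω) ∂μ)
        + ∫ ω, C (g11 ω * p1 ω) ∂μ) / 2 :=
  S5_zero μ g22 g21 g12 g11 p2 p1

variable {μ g11 g12 g21 g22 p1 p2}

lemma S2_zero_le (hg11 : Measurable g11) (hg12 : Measurable g12)
    (hp1 : Measurable p1) (hp2 : Measurable p2)
    (hg11n : ∀ ω, 0 ≤ g11 ω) (hg12n : ∀ ω, 0 ≤ g12 ω)
    (hp1n : ∀ ω, 0 ≤ p1 ω) (hp2n : ∀ ω, 0 ≤ p2 ω)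
    (h : Integrable (fun ω => C (g11 ω * p1 ω + g12 ω * p2 ω)) μ) :
    S2 μ g11 g12 g21 g22 p1 p2 0 0
      ≤ (∫ ω, C (g11 ω * p1 ω) ∂μ) + ∫ ω, C (g12 ω * p2 ω) ∂μ := by
  rw [S2_zero]
  exact integral_C_add_le (hg11.mul hp1) (hg12.mul hp2)
    (fun ω => mul_nonneg (hg11n ω) (hp1n ω)) (fun ω => mul_nonneg (hg12n ω) (hp2n ω)) h

lemma S1_le_S1_zero {a1 a2 : Ω → ℝ}
    (hg11n : ∀ ω, 0 ≤ g11 ω) (hg12n : ∀ ω, 0 ≤ g12 ω)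
    (hg21n : ∀ ω, 0 ≤ g21 ω) (hg22n : ∀ ω, 0 ≤ g22 ω)
    (hp1n : ∀ ω, 0 ≤ p1 ω) (hp2n : ∀ ω, 0 ≤ p2 ω)
    (ha1 : ∀ ω, 0 ≤ a1 ω) (ha2 : ∀ ω, 0 ≤ a2 ω)
    (h1 : Integrable (fun ω => C (g11 ω * p1 ω)) μ)
    (h2 : Integrable (fun ω => C (g22 ω * p2 ω)) μ) :
    S1 μ g11 g12 g21 g22 p1 p2 a1 a2 ≤ S1 μ g11 g12 g21 g22 p1 p2 0 0 := by
  have hi12 (ω : Ω) : 0 ≤ a2 ω * g12 ω * p2 ω :=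
    mul_nonneg (mul_nonneg (ha2 ω) (hg12n ω)) (hp2n ω)
  have hi21 (ω : Ω) : 0 ≤ a1 ω * g21 ω * p1 ω :=
    mul_nonneg (mul_nonneg (ha1 ω) (hg21n ω)) (hp1n ω)
  have hd11 (ω : Ω) : 0 ≤ g11 ω * p1 ω := mul_nonneg (hg11n ω) (hp1n ω)
  have hd22 (ω : Ω) : 0 ≤ g22 ω * p2 ω := mul_nonneg (hg22n ω) (hp2n ω)
  rw [S1_zero]
  -- `integral_mono_of_nonneg` needs no integrability of the smaller side
  refine add_le_add (integral_mono_of_nonneg ?_ h1 ?_) (integral_mono_of_nonneg ?_ h2 ?_) <;>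
    refine .of_forall fun ω => ?_
  · exact C_nonneg (div_nonneg (hd11 ω) (by linarith [hi12 ω]))
  · exact C_div_one_add_le (hd11 ω) (hi12 ω)
  · exact C_nonneg (div_nonneg (hd22 ω) (by linarith [hi21 ω]))
  · exact C_div_one_add_le (hd22 ω) (hi21 ω)

lemma minS_zero_eq_S1
    (hg11 : Measurable g11) (hg12 : Measurable g12)
    (hg21 : Measurable g21) (hg22 : Measurable g22)
    (hg11n : ∀ ω, 0 ≤ g11 ω) (hg12n : ∀ ω, 0 ≤ g12 ω)
    (hg21n : ∀ ω, 0 ≤ g21 ω) (hg22n : ∀ ω, 0 ≤ g22 ω)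
    (hp1 : Measurable p1) (hp2 : Measurable p2) (hp1n : ∀ ω, 0 ≤ p1 ω) (hp2n : ∀ ω, 0 ≤ p2 ω)
    (h1 : Integrable (fun ω => C (g11 ω * p1 ω + g12 ω * p2 ω)) μ)
    (h2 : Integrable (fun ω => C (g21 ω * p1 ω + g22 ω * p2 ω)) μ)
    (hEVS : S1 μ g11 g12 g21 g22 p1 p2 0 0
      < min (S2 μ g11 g12 g21 g22 p1 p2 0 0) (S3 μ g11 g12 g21 g22 p1 p2 0 0)) :
    minS μ g11 g12 g21 g22 p1 p2 0 0 = S1 μ g11 g12 g21 g22 p1 p2 0 0 := by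
  have hS2 : S2 μ g11 g12 g21 g22 p1 p2 0 0
      ≤ (∫ ω, C (g11 ω * p1 ω) ∂μ) + ∫ ω, C (g12 ω * p2 ω) ∂μ :=
    S2_zero_le hg11 hg12 hp1 hp2 hg11n hg12n hp1n hp2n h1
  have hS3 : S3 μ g11 g12 g21 g22 p1 p2 0 0
      ≤ (∫ ω, C (g22 ω * p2 ω) ∂μ) + ∫ ω, C (g21 ω * p1 ω) ∂μ :=
    S2_zero_le hg22 hg21 hp2 hp1 hg22n hg21n hp2n hp1n (by simpa only [add_comm] using h2)
  obtain ⟨hlt2, hlt3⟩ := lt_min_iff.mp hEVS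
  rw [S1_zero] at hlt2 hlt3
  rw [minS, S4_zero, S5_zero, S6_zero, S1_zero]
  exact min_eq_left <| le_min (by linarith) <| le_min (by linarith) <| le_min (by linarith) <|
    le_min (by linarith) (by linarith)

end SumRates

theorem stmt7_general (μ : Measure Ω)
    (g11 g12 g21 g22 : Ω → ℝ)
    (hg11 : Measurable g11) (hg12 : Measurable g12)
    (hg21 : Measurable g21) (hg22 : Measurable g22)
    (hg11n : ∀ ω, 0 ≤ g11 ω) (hg12n : ∀ ω, 0 ≤ g12 ω)
    (hg21n : ∀ ω, 0 ≤ g21 ω) (hg22n : ∀ ω, 0 ≤ g22 ω)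
    (P1bar P2bar : ℝ)
    (hInt : ∀ q1 q2 : Ω → ℝ, Feasible μ P1bar P2bar q1 q2 →
      Integrable (fun ω => C (g11 ω * q1 ω + g12 ω * q2 ω)) μ ∧
      Integrable (fun ω => C (g21 ω * q1 ω + g22 ω * q2 ω)) μ)
    (p1s p2s : Ω → ℝ) (hps : Feasible μ P1bar P2bar p1s p2s)
    (hopt : ∀ q1 q2 : Ω → ℝ, Feasible μ P1bar P2bar q1 q2 →
      S1 μ g11 g12 g21 g22 q1 q2 0 0 ≤ S1 μ g11 g12 g21 g22 p1s p2s 0 0)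
    (hEVS : S1 μ g11 g12 g21 g22 p1s p2s 0 0
      < min (S2 μ g11 g12 g21 g22 p1s p2s 0 0) (S3 μ g11 g12 g21 g22 p1s p2s 0 0)) :
    IsGreatest
      {s : ℝ | ∃ q1 q2 a1 a2 : Ω → ℝ, Feasible μ P1bar P2bar q1 q2 ∧
        Measurable a1 ∧ Measurable a2 ∧
        (∀ ω, a1 ω ∈ Set.Icc (0 : ℝ) 1) ∧ (∀ ω, a2 ω ∈ Set.Icc (0 : ℝ) 1) ∧
        s = minS μ g11 g12 g21 g22 q1 q2 a1 a2}
      (S1 μ g11 g12 g21 g22 p1s p2s 0 0)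
    ∧ S1 μ g11 g12 g21 g22 p1s p2s 0 0
        = (∫ ω, C (g11 ω * p1s ω) ∂μ) + ∫ ω, C (g22 ω * p2s ω) ∂μ
    ∧ minS μ g11 g12 g21 g22 p1s p2s 0 0 = S1 μ g11 g12 g21 g22 p1s p2s 0 0 := by
  have ⟨hp1, hp2, hp1n, hp2n, _⟩ := hps
  have hmin : minS μ g11 g12 g21 g22 p1s p2s 0 0 = S1 μ g11 g12 g21 g22 p1s p2s 0 0 :=
    minS_zero_eq_S1 hg11 hg12 hg21 hg22 hg11n hg12n hg21n hg22n hp1 hp2 hp1n hp2n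
      (hInt _ _ hps).1 (hInt _ _ hps).2 hEVS
  have hzero : ∀ ω, (0 : Ω → ℝ) ω ∈ Set.Icc (0 : ℝ) 1 := fun _ => ⟨le_rfl, zero_le_one⟩
  refine ⟨⟨⟨p1s, p2s, 0, 0, hps, measurable_const, measurable_const, hzero, hzero, hmin.symm⟩,
    ?_⟩, S1_zero .., hmin⟩
  rintro s ⟨q1, q2, a1, a2, hq, -, -, ha1, ha2, rfl⟩
  have ⟨hq1, hq2, hq1n, hq2n, _⟩ := hq
  have hC1 := integrable_C_left (hg11.mul hq1) (fun ω => mul_nonneg (hg11n ω) (hq1n ω))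
    (fun ω => mul_nonneg (hg12n ω) (hq2n ω)) (hInt _ _ hq).1
  have hC2 := integrable_C_right (hg22.mul hq2) (fun ω => mul_nonneg (hg21n ω) (hq1n ω))
    (fun ω => mul_nonneg (hg22n ω) (hq2n ω)) (hInt _ _ hq).2
  calc minS μ g11 g12 g21 g22 q1 q2 a1 a2
      ≤ S1 μ g11 g12 g21 g22 q1 q2 a1 a2 := min_le_left _ _
    _ ≤ S1 μ g11 g12 g21 g22 q1 q2 0 0 :=
      S1_le_S1_zero hg11n hg12n hg21n hg22n hq1n hq2n (fun ω => (ha1 ω).1) (fun ω => (ha2 ω).1)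
        hC1 hC2
    _ ≤ S1 μ g11 g12 g21 g22 p1s p2s 0 0 := hopt q1 q2 hq

/-- If `p*` maximizes `S1(0,p)` over the feasible set `𝒫` (single-user
waterfilling for the two interference-free links) and the ergodic-very-strong condition
`S1(0,p*) < min(S2(0,p*), S3(0,p*))` holds, then the supremum over all `p ∈ 𝒫` and all
power-split policies of `min_{j∈{1,…,6}} S_j(α,p)` equals
`S1(0,p*) = E[C(g11 p1*)] + E[C(g22 p2*)]`, attained at `α ≡ 0` and `p = p*`. -/
theorem stmt7 (μ : Measure Ω) [IsProbabilityMeasure μ]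
    (g11 g12 g21 g22 : Ω → ℝ)
    (hg11 : Measurable g11) (hg12 : Measurable g12)
    (hg21 : Measurable g21) (hg22 : Measurable g22)
    (hg11n : ∀ ω, 0 ≤ g11 ω) (hg12n : ∀ ω, 0 ≤ g12 ω)
    (hg21n : ∀ ω, 0 ≤ g21 ω) (hg22n : ∀ ω, 0 ≤ g22 ω)
    (P1bar P2bar : ℝ) (hP1 : 0 < P1bar) (hP2 : 0 < P2bar)
    (hInt : ∀ q1 q2 : Ω → ℝ, Feasible μ P1bar P2bar q1 q2 →
      Integrable (fun ω => C (g11 ω * q1 ω + g12 ω * q2 ω)) μ ∧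
      Integrable (fun ω => C (g21 ω * q1 ω + g22 ω * q2 ω)) μ)
    (p1s p2s : Ω → ℝ) (hps : Feasible μ P1bar P2bar p1s p2s)
    (hopt : ∀ q1 q2 : Ω → ℝ, Feasible μ P1bar P2bar q1 q2 →
      S1 μ g11 g12 g21 g22 q1 q2 0 0 ≤ S1 μ g11 g12 g21 g22 p1s p2s 0 0)
    (hEVS : S1 μ g11 g12 g21 g22 p1s p2s 0 0
      < min (S2 μ g11 g12 g21 g22 p1s p2s 0 0) (S3 μ g11 g12 g21 g22 p1s p2s 0 0)) :
    IsGreatest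
      {s : ℝ | ∃ q1 q2 a1 a2 : Ω → ℝ, Feasible μ P1bar P2bar q1 q2 ∧
        Measurable a1 ∧ Measurable a2 ∧
        (∀ ω, a1 ω ∈ Set.Icc (0 : ℝ) 1) ∧ (∀ ω, a2 ω ∈ Set.Icc (0 : ℝ) 1) ∧
        s = minS μ g11 g12 g21 g22 q1 q2 a1 a2}
      (S1 μ g11 g12 g21 g22 p1s p2s 0 0)
    ∧ S1 μ g11 g12 g21 g22 p1s p2s 0 0
        = (∫ ω, C (g11 ω * p1s ω) ∂μ) + ∫ ω, C (g22 ω * p2s ω) ∂μ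
    ∧ minS μ g11 g12 g21 g22 p1s p2s 0 0 = S1 μ g11 g12 g21 g22 p1s p2s 0 0 :=
  stmt7_general μ g11 g12 g21 g22 hg11 hg12 hg21 hg22 hg11n hg12n hg21n hg22n P1bar P2bar hInt p1s
    p2s hps hopt hEVS
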